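/- arXiv:1801.01097 — 3 statements merged into one kernel-verified Lean document; each statement's English description precedes it below -/
import Mathlib

section
/- Let Δ ⊆ ℝ^{d-1} be a nonempty compact convex set, a > 0, and P ⊆ ℝ × ℝ^{d-1} a convex set such that P ∩ ([-a,-c] × ℝ^{d-1}) = [-a,-c] × Δ for some c with -a < -c < a. Then every point (t,τ) ∈ P with t ∈ [-a,a] satisfies τ ∈ Δ, i.e. P ∩ ([-a,a] × ℝ^{d-1}) ⊆ [-a,a] × Δ. -/
/-- convexity propagates the cross-section Δ through the whole interval. -/
theorem convex_slab_propagation {n : ℕ}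
    (Δ : Set (EuclideanSpace ℝ (Fin n)))
    (hne : Δ.Nonempty) (hcomp : IsCompact Δ) (hconv : Convex ℝ Δ)
    (a c : ℝ) (ha : 0 < a) (hc1 : -a < -c) (hc2 : -c < a)
    (P : Set (ℝ × EuclideanSpace ℝ (Fin n))) (hPconv : Convex ℝ P)
    (hslab : P ∩ (Set.Icc (-a) (-c) ×ˢ (Set.univ : Set (EuclideanSpace ℝ (Fin n))))
      = Set.Icc (-a) (-c) ×ˢ Δ) :
    P ∩ (Set.Icc (-a) a ×ˢ (Set.univ : Set (EuclideanSpace ℝ (Fin n))))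
      ⊆ Set.Icc (-a) a ×ˢ Δ := by
  rintro ⟨t, τ⟩ ⟨hP, ht, -⟩
  refine ⟨ht, ?_⟩
  by_cases htc : t ≤ -c
  · have : (t, τ) ∈ Set.Icc (-a) (-c) ×ˢ Δ := by
      rw [← hslab]
      exact ⟨hP, ⟨ht.1, htc⟩, Set.mem_univ _⟩
    exact this.2
  push_neg at htc
  -- t > -c
  have hta : (0:ℝ) < t + a := by linarith [ht.1]
  set μ : ℝ := (a - c) / (t + a) with hμdef
  have hμpos : 0 < μ := div_pos (by linarith) hta
  have hμle : μ ≤ 1 := by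
    rw [div_le_one hta]; linarith
  -- key contraction step
  have key : ∀ σ ∈ Δ, (1 - μ) • σ + μ • τ ∈ Δ := by
    intro σ hσ
    have hσP : ((-a : ℝ), σ) ∈ P := by
      have : ((-a : ℝ), σ) ∈ Set.Icc (-a) (-c) ×ˢ Δ :=
        ⟨⟨le_refl _, le_of_lt hc1⟩, hσ⟩
      rw [← hslab] at this
      exact this.1
    have hmem : (1 - μ) • ((-a : ℝ), σ) + μ • (t, τ) ∈ P :=
      hPconv hσP hP (by linarith) (le_of_lt hμpos) (by ring)
    have hfst : (1 - μ) * (-a) + μ * t = -c := by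
      have : μ * (t + a) = a - c := by
        rw [hμdef]; field_simp
      nlinarith [this]
    have hmem2 : ((1 - μ) * (-a) + μ * t, (1 - μ) • σ + μ • τ) ∈
        Set.Icc (-a) (-c) ×ˢ Δ := by
      rw [← hslab]
      refine ⟨hmem, ?_, Set.mem_univ _⟩; rw [hfst]; exact ⟨le_of_lt hc1, le_refl _⟩
    exact hmem2.2
  -- iterate
  obtain ⟨σ₀, hσ₀⟩ := hne
  set g : ℕ → EuclideanSpace ℝ (Fin n) :=
    fun k => (1 - μ) ^ k • σ₀ + (1 - (1 - μ) ^ k) • τ with hg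
  have hgmem : ∀ k, g k ∈ Δ := by
    intro k
    induction k with
    | zero => simpa [hg] using hσ₀
    | succ k ih =>
      have : g (k + 1) = (1 - μ) • g k + μ • τ := by
        simp only [hg]
        rw [pow_succ]
        module
      rw [this]
      exact key _ ih
  have hlim : Filter.Tendsto g Filter.atTop (nhds τ) := by
    have h01 : |1 - μ| < 1 := by
      rw [abs_lt]; constructor <;> linarith
    have hpow : Filter.Tendsto (fun k : ℕ => (1 - μ) ^ k) Filter.atTop (nhds 0) :=
      tendsto_pow_atTop_nhds_zero_of_abs_lt_one h01
    have h1 : Filter.Tendsto (fun k : ℕ => (1 - μ) ^ k • σ₀) Filter.atTop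
        (nhds ((0:ℝ) • σ₀)) := hpow.smul_const σ₀
    have h2 : Filter.Tendsto (fun k : ℕ => (1 - (1 - μ) ^ k) • τ) Filter.atTop
        (nhds (((1:ℝ) - 0) • τ)) := ((tendsto_const_nhds.sub hpow).smul_const τ)
    have := h1.add h2
    simpa using this
  exact hcomp.isClosed.mem_of_tendsto hlim (Filter.Eventually.of_forall hgmem)
end

section
/- Let Δ₁, Δ₂ ⊆ ℝ^{d-1} be nonempty compact convex sets, a > 0, and P ⊆ ℝ^d convex with P ∩ ([-a,-c] × ℝ^{d-1}) = [-a,-c] × Δ₁ and P ∩ ([c',a] × ℝ^{d-1}) = [c',a] × Δ₂ for some -a < -c < c' < a. Then Δ₁ = Δ₂ and P ∩ ([-a,a] × ℝ^{d-1}) = [-a,a] × Δ₁. -/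
open Filter Topology

/-- If a closed nonempty set is stable under the contraction `p ↦ (1-s)•p + s•x`
with `0 < s ≤ 1`, then it contains `x`. -/
lemma iter_mem_of_contraction {E : Type*} [NormedAddCommGroup E] [NormedSpace ℝ E]
    {Δ : Set E} (hcl : IsClosed Δ) (hne : Δ.Nonempty) {x : E} {s : ℝ}
    (hs0 : 0 < s) (hs1 : s ≤ 1)
    (h : ∀ p ∈ Δ, (1 - s) • p + s • x ∈ Δ) : x ∈ Δ := by
  obtain ⟨p₀, hp₀⟩ := hne
  have hr0 : (0:ℝ) ≤ 1 - s := by linarith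
  have hr1 : (1:ℝ) - s < 1 := by linarith
  have hmem : ∀ k : ℕ, x + (1 - s) ^ k • (p₀ - x) ∈ Δ := by
    intro k
    induction k with
    | zero => simpa using hp₀
    | succ k ih =>
      have hmemk := h _ ih
      have heq : (1 - s) • (x + (1 - s) ^ k • (p₀ - x)) + s • x
          = x + (1 - s) ^ (k + 1) • (p₀ - x) := by
        rw [pow_succ]
        module
      rwa [heq] at hmemk
  have h0 : Tendsto (fun k : ℕ => (1 - s) ^ k) atTop (𝓝 0) :=
    tendsto_pow_atTop_nhds_zero_of_lt_one hr0 hr1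
  have htend : Tendsto (fun k : ℕ => x + (1 - s) ^ k • (p₀ - x)) atTop (𝓝 x) := by
    have h1 := h0.smul_const (p₀ - x)
    simpa using tendsto_const_nhds.add h1
  exact hcl.mem_of_tendsto htend (Filter.Eventually.of_forall hmem)

/-- global convexity theorem in convex-geometric form. -/
theorem convex_two_slabs_product {n : ℕ}
    (Δ₁ Δ₂ : Set (EuclideanSpace ℝ (Fin n)))
    (hne₁ : Δ₁.Nonempty) (hcomp₁ : IsCompact Δ₁) (hconv₁ : Convex ℝ Δ₁)
    (hne₂ : Δ₂.Nonempty) (hcomp₂ : IsCompact Δ₂) (hconv₂ : Convex ℝ Δ₂)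
    (a c c' : ℝ) (ha : 0 < a) (h1 : -a < -c) (h2 : -c < c') (h3 : c' < a)
    (P : Set (ℝ × EuclideanSpace ℝ (Fin n))) (hPconv : Convex ℝ P)
    (hslab₁ : P ∩ (Set.Icc (-a) (-c) ×ˢ (Set.univ : Set (EuclideanSpace ℝ (Fin n))))
      = Set.Icc (-a) (-c) ×ˢ Δ₁)
    (hslab₂ : P ∩ (Set.Icc c' a ×ˢ (Set.univ : Set (EuclideanSpace ℝ (Fin n))))
      = Set.Icc c' a ×ˢ Δ₂) :
    Δ₁ = Δ₂ ∧
    P ∩ (Set.Icc (-a) a ×ˢ (Set.univ : Set (EuclideanSpace ℝ (Fin n))))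
      = Set.Icc (-a) a ×ˢ Δ₁ := by
  have hca : c < a := by linarith
  have hca' : -a < c' := by linarith
  have hac : -c < a := by linarith
  -- membership transfer lemmas
  have hP1 : ∀ t ∈ Set.Icc (-a) (-c), ∀ p ∈ Δ₁, ((t : ℝ), p) ∈ P := by
    intro t ht p hp
    have hm : ((t, p) : ℝ × EuclideanSpace ℝ (Fin n)) ∈ Set.Icc (-a) (-c) ×ˢ Δ₁ := ⟨ht, hp⟩
    rw [← hslab₁] at hm
    exact hm.1
  have hP2 : ∀ t ∈ Set.Icc c' a, ∀ p ∈ Δ₂, ((t : ℝ), p) ∈ P := by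
    intro t ht p hp
    have hm : ((t, p) : ℝ × EuclideanSpace ℝ (Fin n)) ∈ Set.Icc c' a ×ˢ Δ₂ := ⟨ht, hp⟩
    rw [← hslab₂] at hm
    exact hm.1
  have hmem1 : ∀ q ∈ P, q.1 ∈ Set.Icc (-a) (-c) → q.2 ∈ Δ₁ := by
    intro q hq hq1
    have hm : q ∈ Set.Icc (-a) (-c) ×ˢ Δ₁ := by
      rw [← hslab₁]; exact ⟨hq, hq1, trivial⟩
    exact hm.2
  have hmem2 : ∀ q ∈ P, q.1 ∈ Set.Icc c' a → q.2 ∈ Δ₂ := by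
    intro q hq hq1
    have hm : q ∈ Set.Icc c' a ×ˢ Δ₂ := by
      rw [← hslab₂]; exact ⟨hq, hq1, trivial⟩
    exact hm.2
  -- Δ₂ ⊆ Δ₁
  have hsub21 : Δ₂ ⊆ Δ₁ := by
    intro x hx
    have hden : (0:ℝ) < a + c' := by linarith
    set s : ℝ := (a - c) / (a + c') with hs
    have hs0 : 0 < s := div_pos (by linarith) hden
    have hs1 : s ≤ 1 := by rw [div_le_one hden]; linarith
    refine iter_mem_of_contraction hcomp₁.isClosed hne₁ hs0 hs1 (fun p hp => ?_)
    have hq : (1 - s) • ((-a : ℝ), p) + s • ((c' : ℝ), x) ∈ P :=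
      hPconv (hP1 (-a) ⟨le_refl _, by linarith⟩ p hp)
        (hP2 c' ⟨le_refl _, by linarith⟩ x hx)
        (by linarith) hs0.le (by ring)
    have hfst : ((1 - s) • ((-a : ℝ), p) + s • ((c' : ℝ), x)).1 = -c := by
      show (1 - s) * (-a) + s * c' = -c
      rw [hs]; field_simp; ring
    have := hmem1 _ hq (by rw [hfst]; exact ⟨by linarith, le_refl _⟩)
    simpa using this
  -- Δ₁ ⊆ Δ₂
  have hsub12 : Δ₁ ⊆ Δ₂ := by
    intro x hx
    have hden : (0:ℝ) < a + c := by linarith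
    set s : ℝ := (a - c') / (a + c) with hs
    have hs0 : 0 < s := div_pos (by linarith) hden
    have hs1 : s ≤ 1 := by rw [div_le_one hden]; linarith
    refine iter_mem_of_contraction hcomp₂.isClosed hne₂ hs0 hs1 (fun p hp => ?_)
    have hq : (1 - s) • ((a : ℝ), p) + s • ((-c : ℝ), x) ∈ P :=
      hPconv (hP2 a ⟨le_of_lt h3, le_refl _⟩ p hp)
        (hP1 (-c) ⟨le_of_lt h1, le_refl _⟩ x hx)
        (by linarith) hs0.le (by ring)
    have hfst : ((1 - s) • ((a : ℝ), p) + s • ((-c : ℝ), x)).1 = c' := by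
      show (1 - s) * a + s * (-c) = c'
      rw [hs]; field_simp; ring
    have := hmem2 _ hq (by rw [hfst]; exact ⟨le_refl _, le_of_lt h3⟩)
    simpa using this
  have hΔ : Δ₁ = Δ₂ := Set.Subset.antisymm hsub12 hsub21
  refine ⟨hΔ, ?_⟩
  apply Set.Subset.antisymm
  · -- P ∩ big slab ⊆ product
    rintro ⟨t, x⟩ ⟨hqP, ht, -⟩
    refine ⟨ht, ?_⟩
    by_cases htc : t ≤ -c
    · exact hmem1 _ hqP ⟨ht.1, htc⟩
    by_cases htc' : c' ≤ t
    · exact hΔ ▸ hmem2 _ hqP ⟨htc', ht.2⟩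
    push_neg at htc htc'
    -- middle: -c < t < c'
    have hden : (0:ℝ) < a + t := by linarith
    set s : ℝ := (a - c) / (a + t) with hs
    have hs0 : 0 < s := div_pos (by linarith) hden
    have hs1 : s ≤ 1 := by rw [div_le_one hden]; linarith
    refine iter_mem_of_contraction hcomp₁.isClosed hne₁ hs0 hs1 (fun p hp => ?_)
    have hq : (1 - s) • ((-a : ℝ), p) + s • ((t : ℝ), x) ∈ P :=
      hPconv (hP1 (-a) ⟨le_refl _, by linarith⟩ p hp) hqP
        (by linarith) hs0.le (by ring)
    have hfst : ((1 - s) • ((-a : ℝ), p) + s • ((t : ℝ), x)).1 = -c := by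
      show (1 - s) * (-a) + s * t = -c
      rw [hs]; field_simp; ring
    have := hmem1 _ hq (by rw [hfst]; exact ⟨by linarith, le_refl _⟩)
    simpa using this
  · -- product ⊆ P ∩ big slab
    rintro ⟨t, x⟩ ⟨ht, hx⟩
    refine ⟨?_, ht, trivial⟩
    set lam : ℝ := (a - t) / (2 * a) with hlam
    have hlam0 : 0 ≤ lam := div_nonneg (by linarith [ht.2]) (by linarith)
    have hlam1 : lam ≤ 1 := by
      rw [hlam, div_le_one (by linarith)]; linarith [ht.1]
    have hcomb : lam • ((-a : ℝ), x) + (1 - lam) • ((a : ℝ), x)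
        = ((t : ℝ), x) := by
      have hfst : lam * (-a) + (1 - lam) * a = t := by
        rw [hlam]; field_simp; ring
      refine Prod.ext ?_ ?_
      · show lam * (-a) + (1 - lam) * a = t
        exact hfst
      · show lam • x + (1 - lam) • x = x
        module
    have := hPconv (hP1 (-a) ⟨le_refl _, by linarith⟩ x hx)
      (hP2 a ⟨le_of_lt h3, le_refl _⟩ x (hsub12 hx))
      hlam0 (sub_nonneg.mpr hlam1) (by ring)
    rwa [hcomb] at this
end

section
/- Let Δ ⊆ ℝ^{d-1} be compact convex, a > 0, τ ∈ ℝ^{d-1} with τ ∉ Δ, t ∈ [-a,a], and let σ ∈ Δ be a point of Δ at minimal distance from τ. Suppose the segment ℓ from (t,τ) to (-a,σ) in ℝ^d satisfies: for some s with -a < s < t, the intersection of ℓ with [-a,s] × ℝ^{d-1} is contained in [-a,s] × Δ. Then ℓ meets the hyperplane {s} × ℝ^{d-1} at a point (s,σ') with σ' ∈ Δ and ‖σ' - τ‖ < ‖σ - τ‖, contradicting minimality of σ; hence no such τ exists. -/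
/-- the distance-decreasing argument yields a contradiction, so no such τ exists. -/
theorem no_point_outside_slab {n : ℕ}
    (Δ : Set (EuclideanSpace ℝ (Fin n))) (hcomp : IsCompact Δ) (hconv : Convex ℝ Δ)
    (a : ℝ) (ha : 0 < a)
    (τ : EuclideanSpace ℝ (Fin n)) (hτ : τ ∉ Δ)
    (t : ℝ) (ht : t ∈ Set.Icc (-a) a)
    (σ : EuclideanSpace ℝ (Fin n)) (hσ : σ ∈ Δ)
    (hmin : ∀ x ∈ Δ, ‖σ - τ‖ ≤ ‖x - τ‖)
    (s : ℝ) (hs1 : -a < s) (hs2 : s < t)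
    (hseg : segment ℝ ((t, τ) : ℝ × EuclideanSpace ℝ (Fin n)) (-a, σ) ∩
        (Set.Icc (-a) s ×ˢ (Set.univ : Set (EuclideanSpace ℝ (Fin n))))
      ⊆ Set.Icc (-a) s ×ˢ Δ) :
    (∃ σ' ∈ Δ, ((s, σ') : ℝ × EuclideanSpace ℝ (Fin n)) ∈
        segment ℝ ((t, τ) : ℝ × EuclideanSpace ℝ (Fin n)) (-a, σ) ∧
        ‖σ' - τ‖ < ‖σ - τ‖) ∧ False := by
  have hta : 0 < t + a := by linarith
  set u : ℝ := (t - s) / (t + a) with hu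
  have hu0 : 0 < u := div_pos (by linarith) hta
  have hu1 : u < 1 := (div_lt_one hta).2 (by linarith)
  set σ' : EuclideanSpace ℝ (Fin n) := (1 - u) • τ + u • σ with hσ'
  have hfirst : (1 - u) * t + u * (-a) = s := by
    rw [hu]; field_simp; ring
  have hmem : ((s, σ') : ℝ × EuclideanSpace ℝ (Fin n)) ∈
      segment ℝ ((t, τ) : ℝ × EuclideanSpace ℝ (Fin n)) (-a, σ) := by
    refine ⟨1 - u, u, by linarith, le_of_lt hu0, by ring, ?_⟩
    refine Prod.ext ?_ ?_
    · simpa using hfirst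
    · simp [hσ']
  have hσ'Δ : σ' ∈ Δ := by
    have := hseg ⟨hmem, ⟨le_of_lt hs1, le_refl s⟩, Set.mem_univ _⟩
    exact this.2
  have hστ : σ - τ ≠ 0 := sub_ne_zero.2 (fun h => hτ (h ▸ hσ))
  have hdiff : σ' - τ = u • (σ - τ) := by
    rw [hσ']; module
  have hlt : ‖σ' - τ‖ < ‖σ - τ‖ := by
    rw [hdiff, norm_smul, Real.norm_eq_abs, abs_of_pos hu0]
    have : 0 < ‖σ - τ‖ := norm_pos_iff.2 hστ
    nlinarith
  exact ⟨⟨σ', hσ'Δ, hmem, hlt⟩, absurd (hmin σ' hσ'Δ) (not_le.2 hlt)⟩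
end
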